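/- Let (Γ,w) be a connected weighted graph of genus g ≥ 2 and let A ⊆ V be a union of ≈-classes (equivalently, no bridge of Γ joins A to its complement); let A² = φ(A) ⊆ V². Then δ_A computed in Γ equals δ_{A²} computed in Γ², w_A computed in (Γ,w) equals w_{A²} computed in (Γ²,w²), and hence m_A(d) = m_{A²}(d) for every integer d. Moreover A induces a connected sub-multigraph of Γ if and only if A² induces a connected sub-multigraph of Γ². -/

import Mathlib

open Finset

noncomputable section
open scoped Classical

variable {V : Type} [Fintype V] [DecidableEq V]

/-- The simple graph underlying a multigraph with multiplicity function `k`: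
`u` and `v` are adjacent iff `u ≠ v` and some edge joins them. -/
def graphOf (k : V → V → ℕ) : SimpleGraph V where
  Adj u v := u ≠ v ∧ (0 < k u v ∨ 0 < k v u)
  symm := ⟨fun u v h => ⟨h.1.symm, h.2.symm⟩⟩
  loopless := ⟨fun v h => h.1 rfl⟩

/-- The number of edges of a multigraph: loops plus half the ordered count. -/
def numEdges (k : V → V → ℕ) : ℕ :=
  (∑ v, k v v) + (∑ u, ∑ v ∈ Finset.univ.erase u, k u v) / 2

/-- The genus of a weighted graph: `∑ w(v) + b₁`, with `b₁ = #E - #V + 1`. -/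
def genus (k : V → V → ℕ) (w : V → ℕ) : ℤ :=
  (∑ v, (w v : ℤ)) + ((numEdges k : ℤ) - (Fintype.card V : ℤ) + 1)

/-- Stability: connected, and each weight-zero vertex has valency at least 3. -/
def IsStable (k : V → V → ℕ) (w : V → ℕ) : Prop :=
  (graphOf k).Connected ∧
    ∀ v, w v = 0 → 3 ≤ 2 * k v v + ∑ u ∈ Finset.univ.erase v, k u v

/-- `δ_A`: the number of edges joining `A` to its complement. -/
def deltaA (k : V → V → ℕ) (A : Finset V) : ℤ :=
  ∑ u ∈ A, ∑ v ∈ Aᶜ, (k u v : ℤ)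

/-- `w_A = Σ_{v∈A} (2w(v) − 2 + 2k(v,v) + Σ_{u≠v} k(u,v))`. -/
def wA (k : V → V → ℕ) (w : V → ℕ) (A : Finset V) : ℤ :=
  ∑ v ∈ A, (2 * (w v : ℤ) - 2 + 2 * (k v v : ℤ) + ∑ u ∈ Finset.univ.erase v, (k u v : ℤ))

/-- `d_A`: the total degree of a multidegree on the subset `A`. -/
def degA (d : V → ℤ) (A : Finset V) : ℤ := ∑ v ∈ A, d v

/-- `m_A(d) = d·w_A/(2g−2) − δ_A/2 ∈ ℚ`. -/
def mA (k : V → V → ℕ) (w : V → ℕ) (D : ℤ) (A : Finset V) : ℚ :=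
  (D : ℚ) * (wA k w A : ℚ) / ((2 * genus k w - 2 : ℤ) : ℚ) - (deltaA k A : ℚ) / 2

/-- A balanced multidegree of total degree `D`. -/
def IsBalanced (k : V → V → ℕ) (w : V → ℕ) (D : ℤ) (d : V → ℤ) : Prop :=
  degA d Finset.univ = D ∧ ∀ A : Finset V, mA k w D A ≤ (degA d A : ℚ)

/-- A strictly balanced multidegree of total degree `D`. -/
def IsStrictlyBalanced (k : V → V → ℕ) (w : V → ℕ) (D : ℤ) (d : V → ℤ) : Prop :=
  IsBalanced k w D d ∧
    ∀ A : Finset V, A ≠ ∅ → A ≠ Finset.univ → mA k w D A < (degA d A : ℚ)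

/-- `(Γ,w)` is `d`-general if every balanced multidegree of total degree `d`
is strictly balanced. -/
def IsDGeneral (k : V → V → ℕ) (w : V → ℕ) (D : ℤ) : Prop :=
  ∀ d : V → ℤ, IsBalanced k w D d → IsStrictlyBalanced k w D d

/-- The generator `c_v` of the lattice `Λ`. -/
def cvec (k : V → V → ℕ) (v : V) : V → ℤ := fun u =>
  if u = v then -(∑ x ∈ Finset.univ.erase v, (k x v : ℤ)) else (k u v : ℤ)

/-- The lattice `Λ ⊆ ℤ^V` generated by the `c_v`. -/
def Lambda (k : V → V → ℕ) : AddSubgroup (V → ℤ) :=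
  AddSubgroup.closure (Set.range (cvec k))

/-- The total-degree homomorphism `ℤ^V → ℤ`. -/
def sumHom (V : Type) [Fintype V] : (V → ℤ) →+ ℤ :=
  { toFun := fun d => ∑ v, d v
    map_zero' := by simp
    map_add' := fun a b => by simp [Finset.sum_add_distrib] }

/-- `Z = {d ∈ ℤ^V : Σ_v d(v) = 0}`. -/
def Zsub (V : Type) [Fintype V] : AddSubgroup (V → ℤ) := (sumHom V).ker

/-- Remove the edge(s) joining `a` and `b` from the multigraph. -/
def removeEdge (k : V → V → ℕ) (a b : V) : V → V → ℕ := fun u v =>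
  if (u = a ∧ v = b) ∨ (u = b ∧ v = a) then 0 else k u v

/-- `a`–`b` is a bridge: a single non-loop edge whose removal disconnects the graph. -/
def IsBridge (k : V → V → ℕ) (a b : V) : Prop :=
  a ≠ b ∧ k a b = 1 ∧ ¬ (graphOf (removeEdge k a b)).Connected

/-- `A` induces a connected sub-multigraph. -/
def IsConnectedSubset (k : V → V → ℕ) (A : Finset V) : Prop :=
  ((graphOf k).induce (A : Set V)).Connected

/-- The equivalence relation `≈` on `V` generated by bridges. -/
def contractSetoid (k : V → V → ℕ) : Setoid V :=
  ⟨Relation.EqvGen (fun u v => IsBridge k u v), Relation.EqvGen.is_equivalence _⟩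

/-- The vertex set `V² = V/≈` of the contracted graph `Γ²`. -/
def V2 (k : V → V → ℕ) : Type := Quotient (contractSetoid k)

instance (k : V → V → ℕ) : Finite (V2 k) := Quotient.finite _

instance (k : V → V → ℕ) : Fintype (V2 k) := Fintype.ofFinite _

/-- The fiber of the quotient map `φ : V → V²` over a class `c`. -/
def fiber (k : V → V → ℕ) (c : V2 k) : Finset V :=
  Finset.univ.filter (fun v => Quotient.mk (contractSetoid k) v = c)

/-- The multiplicity function `k²` of the contracted graph `Γ²`. -/
def k2 (k : V → V → ℕ) : V2 k → V2 k → ℕ := fun c c' =>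
  if c = c' then
    (∑ v ∈ fiber k c, k v v) +
      (∑ u ∈ fiber k c, ∑ v ∈ (fiber k c).erase u,
        if IsBridge k u v then 0 else k u v) / 2
  else ∑ u ∈ fiber k c, ∑ v ∈ fiber k c', k u v

/-- The weight function `w²` of the contracted weighted graph `(Γ²,w²)`. -/
def w2 (k : V → V → ℕ) (w : V → ℕ) : V2 k → ℕ := fun c => ∑ v ∈ fiber k c, w v

/-- The pushforward `α(d)` of a multidegree to the contracted graph. -/
def alphaMap (k : V → V → ℕ) (d : V → ℤ) : V2 k → ℤ := fun c => ∑ v ∈ fiber k c, d v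

/-- The setoid on multidegrees of total degree `D`: two are equivalent if their
difference lies in `Λ`; the quotient is `Δ^d`. -/
def degSetoid (k : V → V → ℕ) (D : ℤ) : Setoid {d : V → ℤ // (∑ v, d v) = D} :=
  ⟨fun a b => (a : V → ℤ) - (b : V → ℤ) ∈ Lambda k, by
    constructor
    · intro a; simpa using (Lambda k).zero_mem
    · intro a b h; have h2 := (Lambda k).neg_mem h; rwa [neg_sub] at h2
    · intro a b c h1 h2
      have h3 := (Lambda k).add_mem h1 h2
      rwa [sub_add_sub_cancel] at h3⟩

/-- Number of edges of the sub-multigraph induced on `A`. -/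
def numEdgesIn (k : V → V → ℕ) (A : Finset V) : ℕ :=
  (∑ v ∈ A, k v v) + (∑ u ∈ A, ∑ v ∈ A.erase u, k u v) / 2

/-- Blow-up of a multigraph at the single bridge `a`–`b`: one exceptional
vertex is inserted in the middle of the bridge. -/
def blowK (k : V → V → ℕ) (a b : V) : (V ⊕ Unit) → (V ⊕ Unit) → ℕ
  | Sum.inl u, Sum.inl v => if (u = a ∧ v = b) ∨ (u = b ∧ v = a) then 0 else k u v
  | Sum.inl u, Sum.inr _ => if u = a ∨ u = b then 1 else 0
  | Sum.inr _, Sum.inl v => if v = a ∨ v = b then 1 else 0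
  | Sum.inr _, Sum.inr _ => 0

/-- Weight function of the blow-up at one bridge: exceptional vertex has weight 0. -/
def blowW (w : V → ℕ) : V ⊕ Unit → ℕ
  | Sum.inl v => w v
  | Sum.inr _ => 0

/-- Blow-up of a multigraph at a set `S` of bridges (given as ordered pairs):
one exceptional vertex is inserted in the middle of each bridge of `S`. -/
def blowKS (k : V → V → ℕ) (S : Finset (V × V)) :
    (V ⊕ {p : V × V // p ∈ S}) → (V ⊕ {p : V × V // p ∈ S}) → ℕ
  | Sum.inl u, Sum.inl v => if (u, v) ∈ S ∨ (v, u) ∈ S then 0 else k u v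
  | Sum.inl u, Sum.inr e => if u = e.1.1 ∨ u = e.1.2 then 1 else 0
  | Sum.inr e, Sum.inl v => if v = e.1.1 ∨ v = e.1.2 then 1 else 0
  | Sum.inr _, Sum.inr _ => 0

/-- Weight function of the blow-up at a set of bridges. -/
def blowWS (w : V → ℕ) (S : Finset (V × V)) : (V ⊕ {p : V × V // p ∈ S}) → ℕ
  | Sum.inl v => w v
  | Sum.inr _ => 0

/-- Strictly balanced multidegree of total degree `D` on the blow-up `Γ̂_S`:
balanced (with degree 1 on each exceptional vertex), and the inequality is
strict for every proper nonempty `A` such that some edge between `A` and its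
complement has no exceptional endpoint. -/
def IsStrictlyBalancedBlowS (k : V → V → ℕ) (w : V → ℕ) (S : Finset (V × V)) (D : ℤ)
    (dh : (V ⊕ {p : V × V // p ∈ S}) → ℤ) : Prop :=
  IsBalanced (blowKS k S) (blowWS w S) D dh ∧
    (∀ e : {p : V × V // p ∈ S}, dh (Sum.inr e) = 1) ∧
    ∀ A : Finset (V ⊕ {p : V × V // p ∈ S}), A ≠ ∅ → A ≠ Finset.univ →
      (∃ u v : V, Sum.inl u ∈ A ∧ Sum.inl v ∉ A ∧ 0 < blowKS k S (Sum.inl u) (Sum.inl v)) →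
      mA (blowKS k S) (blowWS w S) D A < (degA dh A : ℚ)

/-- Multiplicity function of the vine graph: two vertices joined by `δ` edges,
no loops. -/
def vineK (δ : ℕ) : Fin 2 → Fin 2 → ℕ := fun u v => if u = v then 0 else δ

/-- Weight function of the vine graph with weights `g₁, g₂`. -/
def vineW (g1 g2 : ℕ) : Fin 2 → ℕ := fun v => if v = 0 then g1 else g2

/-- The data of a stable vine graph of genus `g` with weights `g₁, g₂` and `δ` edges. -/
def StableVine (g : ℤ) (g1 g2 δ : ℕ) : Prop :=
  2 ≤ δ ∧ ((g1 = 0 ∨ g2 = 0) → 3 ≤ δ) ∧ (g1 : ℤ) + (g2 : ℤ) + (δ : ℤ) - 1 = g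

/-!
Bridges of a connected graph lie on no cycle, so they form a forest whose components are the
`≈`-classes; a class `c` therefore spans a tree with `#c - 1` bridges. Contracting them keeps all
other edges: edges between classes become edges of `Γ²`, non-bridge edges inside a class become
loops. For a union `A` of classes the edges leaving `A` are thus unchanged, and in `w_A` the
`#c - 1` lost edges (each counted twice) exactly compensate the `#c - 1` lost vertices (each
contributing `-2`). For `A = V` this gives `g(Γ²) = g(Γ)`, hence `m_A = m_{A²}`. Connectivity
transfers along `φ` because every class is connected through its bridges inside `A`.
-/

end

open Finset
open scoped Classical

variable {α β : Type*}

namespace SimpleGraph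

lemma eqvGen_iff_reachable_fromRel {r : α → α → Prop} {u v : α} :
    Relation.EqvGen r u v ↔ (fromRel r).Reachable u v := by
  rw [← Relation.EqvGen.reflTransGen_symmGen, reachable_iff_reflTransGen]
  constructor
  · intro h
    induction h with
    | refl => rfl
    | @tail b c _ hbc ih =>
      by_cases hne : b = c
      · exact hne ▸ ih
      · exact ih.tail ⟨hne, hbc⟩
  · exact Relation.ReflTransGen.mono (fun _ _ h => h.2) u v

lemma connected_iff_of_surjective {G : SimpleGraph α} {H : SimpleGraph β} {f : α → β}
    (hf : Function.Surjective f)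
    (hmap : ∀ ⦃a b⦄, G.Adj a b → f a ≠ f b → H.Adj (f a) (f b))
    (hlift : ∀ ⦃c d⦄, H.Adj c d → ∃ a b, f a = c ∧ f b = d ∧ G.Adj a b)
    (hfiber : ∀ ⦃a b⦄, f a = f b → G.Reachable a b) :
    G.Connected ↔ H.Connected := by
  have push : ∀ ⦃a b⦄, G.Reachable a b → H.Reachable (f a) (f b) := by
    rintro a b ⟨p⟩
    induction p with
    | nil => rfl
    | @cons a c b hac _ ih =>
      by_cases hfac : f a = f c
      · exact hfac ▸ ih
      · exact (hmap hac hfac).reachable.trans ih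
  have pull : ∀ ⦃c d⦄, H.Reachable c d →
      ∀ a b, f a = c → f b = d → G.Reachable a b := by
    rintro c d ⟨p⟩
    induction p with
    | nil => exact fun a b ha hb => hfiber (ha.trans hb.symm)
    | cons hcd _ ih =>
      intro a b ha hb
      obtain ⟨a', c', ha', hc', hadj⟩ := hlift hcd
      exact (hfiber (ha.trans ha'.symm)).trans (hadj.reachable.trans (ih c' b hc' hb))
  simp only [connected_iff]
  constructor
  · rintro ⟨hG, ⟨a⟩⟩
    refine ⟨fun c d => ?_, ⟨f a⟩⟩
    obtain ⟨a, rfl⟩ := hf c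
    obtain ⟨b, rfl⟩ := hf d
    exact push (hG a b)
  · rintro ⟨hH, ⟨c⟩⟩
    exact ⟨fun a b => pull (hH (f a) (f b)) a b rfl rfl, ⟨(hf c).choose⟩⟩

lemma IsAcyclic.sum_sum_ite_adj_of_connected_induce {G : SimpleGraph α} [DecidableRel G.Adj]
    (hG : G.IsAcyclic) {s : Finset α} (hs : (G.induce (s : Set α)).Connected) :
    ∑ u ∈ s, ∑ v ∈ s, (if G.Adj u v then 1 else 0) = 2 * (s.card - 1) := by
  have hedges := (IsTree.mk hs (hG.induce _)).card_edgeFinset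
  have hdeg := (G.induce (s : Set α)).sum_degrees_eq_twice_card_edges
  have hcard : Fintype.card (s : Set α) = s.card := by simp
  have hsum : ∑ u ∈ s, ∑ v ∈ s, (if G.Adj u v then 1 else 0) =
      ∑ x : (s : Set α), (G.induce (s : Set α)).degree x := by
    rw [← sum_coe_sort]
    refine sum_congr rfl fun x _ => ?_
    rw [← card_neighborFinset_eq_degree, neighborFinset_eq_filter, card_filter, ← sum_coe_sort]
    rfl
  omega

end SimpleGraph

lemma Finset.even_sum_sum_erase [DecidableEq α] {f : α → α → ℕ}
    (hf : ∀ a b, f a b = f b a) (s : Finset α) : Even (∑ a ∈ s, ∑ b ∈ s.erase a, f a b) := by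
  induction s using Finset.induction_on with
  | empty => simp
  | @insert a s ha ih =>
    have hsplit : ∀ b ∈ s,
        ∑ c ∈ (insert a s).erase b, f b c = f a b + ∑ c ∈ s.erase b, f b c := by
      intro b hb
      rw [erase_insert_of_ne (ne_of_mem_of_not_mem hb ha).symm,
        sum_insert fun h => ha (mem_of_mem_erase h), hf]
    rw [sum_insert ha, erase_insert ha, sum_congr rfl hsplit, sum_add_distrib, ← add_assoc,
      ← two_mul]
    exact (even_two_mul _).add ih

section Bridges

variable {V : Type} [DecidableEq V] {k : V → V → ℕ}

variable (k) in
lemma graphOf_removeEdge (a b : V) :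
    graphOf (removeEdge k a b) = (graphOf k).deleteEdges {s(a, b)} := by
  ext u v
  by_cases h : (u = a ∧ v = b) ∨ (u = b ∧ v = a)
  · have h' : (v = a ∧ u = b) ∨ (v = b ∧ u = a) := by tauto
    simp [graphOf, removeEdge, h, h']
  · have h' : ¬((v = a ∧ u = b) ∨ (v = b ∧ u = a)) := by tauto
    simp [graphOf, removeEdge, h, h']

lemma isBridge_comm (hsym : ∀ u v, k u v = k v u) {a b : V} :
    IsBridge k a b ↔ IsBridge k b a := by
  rw [IsBridge, IsBridge, graphOf_removeEdge, graphOf_removeEdge, Sym2.eq_swap, hsym, ne_comm]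

lemma IsBridge.isBridge_graphOf (hconn : (graphOf k).Connected) {a b : V}
    (h : IsBridge k a b) : (graphOf k).IsBridge s(a, b) := by
  by_contra hnb
  exact h.2.2 (graphOf_removeEdge k a b ▸ hconn.connected_delete_edge_of_not_isBridge hnb)

variable (k) in
def bridgeGraph : SimpleGraph V := SimpleGraph.fromRel (IsBridge k)

lemma bridgeGraph_le_graphOf : bridgeGraph k ≤ graphOf k := by
  rintro u v ⟨hne, h | h⟩
  · exact ⟨hne, Or.inl (h.2.1 ▸ Nat.one_pos)⟩
  · exact ⟨hne, Or.inr (h.2.1 ▸ Nat.one_pos)⟩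

lemma isAcyclic_bridgeGraph (hconn : (graphOf k).Connected) : (bridgeGraph k).IsAcyclic := by
  rw [SimpleGraph.isAcyclic_iff_forall_adj_isBridge]
  rintro u v ⟨-, h | h⟩
  · exact (h.isBridge_graphOf hconn).anti bridgeGraph_le_graphOf
  · exact Sym2.eq_swap ▸ (h.isBridge_graphOf hconn).anti bridgeGraph_le_graphOf

-- The quotient map `φ`, typed into `V2 k` rather than `Quotient (contractSetoid k)` so that
-- images of finsets carry the instances of `V2 k`, as in the statement.
variable (k) in
def contractMap : V → V2 k := Quotient.mk (contractSetoid k)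

lemma contractMap_surjective : Function.Surjective (contractMap k) :=
  Quotient.mk_surjective

lemma contractMap_eq_iff_reachable {u v : V} :
    contractMap k u = contractMap k v ↔ (bridgeGraph k).Reachable u v :=
  Quotient.eq.trans SimpleGraph.eqvGen_iff_reachable_fromRel

lemma two_mul_numEdgesIn (hsym : ∀ u v, k u v = k v u) (s : Finset V) :
    2 * numEdgesIn k s = 2 * ∑ v ∈ s, k v v + ∑ u ∈ s, ∑ v ∈ s.erase u, k u v := by
  rw [numEdgesIn, mul_add, Nat.two_mul_div_two_of_even (even_sum_sum_erase hsym s)]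

variable (k) in
def IsSaturated (A : Finset V) : Prop :=
  ∀ u ∈ A, ∀ v : V, contractMap k v = contractMap k u → v ∈ A

lemma IsSaturated.mem_iff {A : Finset V} (hA : IsSaturated k A) (v : V) :
    v ∈ A ↔ contractMap k v ∈ A.image (contractMap k) := by
  refine ⟨mem_image_of_mem _, fun h => ?_⟩
  obtain ⟨u, hu, huv⟩ := mem_image.1 h
  exact hA u hu v huv.symm

end Bridges

section Contraction

variable {V : Type} [Fintype V] [DecidableEq V] {k : V → V → ℕ}

lemma mem_fiber {c : V2 k} {v : V} : v ∈ fiber k c ↔ contractMap k v = c := by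
  rw [fiber, mem_filter]
  exact and_iff_right (mem_univ v)

lemma connected_induce_fiber (c : V2 k) :
    ((bridgeGraph k).induce (fiber k c : Set V)).Connected := by
  obtain ⟨v, rfl⟩ := contractMap_surjective c
  have : (fiber k (contractMap k v) : Set V) = ((bridgeGraph k).connectedComponentMk v).supp := by
    ext u
    rw [Finset.mem_coe, mem_fiber, contractMap_eq_iff_reachable,
      SimpleGraph.ConnectedComponent.mem_supp_iff, SimpleGraph.ConnectedComponent.eq]
  rw [this]
  exact SimpleGraph.ConnectedComponent.connected_toSimpleGraph _

lemma sum_sum_ite_isBridge_fiber (hsym : ∀ u v, k u v = k v u) (hconn : (graphOf k).Connected)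
    (c : V2 k) :
    ∑ u ∈ fiber k c, ∑ v ∈ fiber k c, (if IsBridge k u v then 1 else 0) =
      2 * ((fiber k c).card - 1) := by
  have hadj : ∀ u v, (bridgeGraph k).Adj u v ↔ IsBridge k u v := fun u v =>
    ⟨fun ⟨_, h⟩ => h.elim id (isBridge_comm hsym).1, fun h => ⟨h.1, Or.inl h⟩⟩
  simp_rw [← hadj]
  exact (isAcyclic_bridgeGraph hconn).sum_sum_ite_adj_of_connected_induce
    (connected_induce_fiber c)

lemma sum_sum_fiber {M : Type*} [AddCommMonoid M] {t : Finset (V2 k)} {B : Finset V}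
    (hB : ∀ v, v ∈ B ↔ contractMap k v ∈ t) (f : V → M) :
    ∑ c ∈ t, ∑ v ∈ fiber k c, f v = ∑ v ∈ B, f v := by
  rw [← Finset.sum_fiberwise_of_maps_to (g := contractMap k) (t := t) fun v hv => (hB v).1 hv]
  refine sum_congr rfl fun c hc => sum_congr ?_ fun _ _ => rfl
  ext v
  rw [mem_fiber, mem_filter, hB]
  exact ⟨fun h => ⟨h ▸ hc, h⟩, And.right⟩

lemma k2_of_ne {c c' : V2 k} (h : c ≠ c') :
    k2 k c c' = ∑ u ∈ fiber k c, ∑ v ∈ fiber k c', k u v :=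
  if_neg h

lemma k2_comm (hsym : ∀ u v, k u v = k v u) (c c' : V2 k) : k2 k c c' = k2 k c' c := by
  rcases eq_or_ne c c' with rfl | h
  · rfl
  · rw [k2_of_ne h, k2_of_ne h.symm, sum_comm]
    simp only [hsym]

lemma k2_pos {u v : V} (hne : contractMap k u ≠ contractMap k v) (h : 0 < k u v) :
    0 < k2 k (contractMap k u) (contractMap k v) := by
  rw [k2_of_ne hne]
  calc 0 < k u v := h
    _ ≤ ∑ v' ∈ fiber k (contractMap k v), k u v' :=
        single_le_sum (fun _ _ => Nat.zero_le _) (mem_fiber.2 rfl)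
    _ ≤ _ := single_le_sum (f := fun u' => ∑ v' ∈ fiber k (contractMap k v), k u' v')
        (fun _ _ => Nat.zero_le _) (mem_fiber.2 rfl)

lemma exists_pos_of_k2_pos {c c' : V2 k} (hne : c ≠ c') (h : 0 < k2 k c c') :
    ∃ u ∈ fiber k c, ∃ v ∈ fiber k c', 0 < k u v := by
  rw [k2_of_ne hne] at h
  obtain ⟨u, hu, hpos⟩ := sum_pos_iff.1 h
  obtain ⟨v, hv, hpos⟩ := sum_pos_iff.1 hpos
  exact ⟨u, hu, v, hv, hpos⟩

lemma fiber_nonempty (c : V2 k) : (fiber k c).Nonempty := by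
  obtain ⟨v, rfl⟩ := contractMap_surjective c
  exact ⟨v, mem_fiber.2 rfl⟩

lemma ne_of_mem_fiber {c d : V2 k} {u v : V} (hne : c ≠ d) (hu : u ∈ fiber k c)
    (hv : v ∈ fiber k d) : u ≠ v := by
  rintro rfl
  exact hne ((mem_fiber.1 hu).symm.trans (mem_fiber.1 hv))

lemma graphOf_k2_adj {u v : V} (hadj : (graphOf k).Adj u v)
    (hne : contractMap k u ≠ contractMap k v) :
    (graphOf (k2 k)).Adj (contractMap k u) (contractMap k v) :=
  ⟨hne, hadj.2.imp (k2_pos hne) (k2_pos hne.symm)⟩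

lemma exists_adj_of_graphOf_k2_adj {c d : V2 k} (hadj : (graphOf (k2 k)).Adj c d) :
    ∃ u ∈ fiber k c, ∃ v ∈ fiber k d, (graphOf k).Adj u v := by
  obtain ⟨hne, hpos | hpos⟩ := hadj
  · obtain ⟨u, hu, v, hv, huv⟩ := exists_pos_of_k2_pos hne hpos
    exact ⟨u, hu, v, hv, ne_of_mem_fiber hne hu hv, Or.inl huv⟩
  · obtain ⟨v, hv, u, hu, hvu⟩ := exists_pos_of_k2_pos hne.symm hpos
    exact ⟨u, hu, v, hv, ne_of_mem_fiber hne hu hv, Or.inr hvu⟩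

lemma two_mul_k2_self (hsym : ∀ u v, k u v = k v u) (c : V2 k) :
    2 * k2 k c c = 2 * ∑ v ∈ fiber k c, k v v +
      ∑ u ∈ fiber k c, ∑ v ∈ (fiber k c).erase u, if IsBridge k u v then 0 else k u v := by
  have hsym' : ∀ u v, (if IsBridge k u v then 0 else k u v) =
      (if IsBridge k v u then 0 else k v u) := fun u v => by
    rw [isBridge_comm hsym, hsym]
  rw [k2, if_pos rfl, mul_add, Nat.two_mul_div_two_of_even (even_sum_sum_erase hsym' _)]

-- The bridges inside a class form a spanning tree of it, so exactly `#c - 1` edges of the class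
-- are lost in `k2 k c c`.
lemma numEdgesIn_fiber (hsym : ∀ u v, k u v = k v u) (hconn : (graphOf k).Connected)
    (c : V2 k) : (numEdgesIn k (fiber k c) : ℤ) = k2 k c c + (fiber k c).card - 1 := by
  set s := fiber k c
  have hsplit : ∀ u v, k u v =
      (if IsBridge k u v then 0 else k u v) + (if IsBridge k u v then 1 else 0) := by
    intro u v
    by_cases h : IsBridge k u v
    · simp [h, h.2.1]
    · simp [h]
  have hbridges : ∑ u ∈ s, ∑ v ∈ s.erase u, (if IsBridge k u v then 1 else 0) =
      2 * (s.card - 1) := by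
    rw [← sum_sum_ite_isBridge_fiber hsym hconn c]
    exact sum_congr rfl fun u _ => sum_erase _ (if_neg fun h => h.1 rfl)
  have hsum : ∑ u ∈ s, ∑ v ∈ s.erase u, k u v =
      ∑ u ∈ s, ∑ v ∈ s.erase u, (if IsBridge k u v then 0 else k u v) +
        ∑ u ∈ s, ∑ v ∈ s.erase u, (if IsBridge k u v then 1 else 0) := by
    simp only [← sum_add_distrib, ← hsplit]
  have hedges := two_mul_numEdgesIn hsym s
  rw [hsum, hbridges, ← add_assoc, ← two_mul_k2_self hsym] at hedges
  have hcard : 0 < s.card := (fiber_nonempty c).card_pos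
  omega

lemma wA_eq_numEdgesIn_add_deltaA (hsym : ∀ u v, k u v = k v u) (w : V → ℕ) (B : Finset V) :
    wA k w B = 2 * ∑ v ∈ B, (w v : ℤ) - 2 * B.card + 2 * numEdgesIn k B + deltaA k B := by
  have hdeg : ∀ v ∈ B, ∑ u ∈ univ.erase v, (k u v : ℤ) =
      ∑ u ∈ B.erase v, (k v u : ℤ) + ∑ u ∈ Bᶜ, (k v u : ℤ) := by
    intro v hv
    have h1 := add_sum_erase univ (fun u => (k v u : ℤ)) (mem_univ v)
    have h2 := add_sum_erase B (fun u => (k v u : ℤ)) hv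
    have h3 := sum_add_sum_compl B (fun u => (k v u : ℤ))
    rw [sum_congr rfl fun u _ => by rw [hsym u v]]
    linarith
  have hE : (2 * numEdgesIn k B : ℤ) =
      2 * ∑ v ∈ B, (k v v : ℤ) + ∑ u ∈ B, ∑ v ∈ B.erase u, (k u v : ℤ) := by
    exact_mod_cast two_mul_numEdgesIn hsym B
  have hwA : wA k w B = ∑ v ∈ B, (2 * (w v : ℤ) - 2 + 2 * (k v v : ℤ) +
      (∑ u ∈ B.erase v, (k v u : ℤ) + ∑ u ∈ Bᶜ, (k v u : ℤ))) :=
    sum_congr rfl fun v hv => by rw [hdeg v hv]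
  rw [hwA, deltaA, hE]
  simp only [sum_add_distrib, sum_sub_distrib, ← mul_sum, sum_const, nsmul_eq_mul]
  ring

lemma wA_univ (hsym : ∀ u v, k u v = k v u) (w : V → ℕ) :
    wA k w univ = 2 * genus k w - 2 := by
  have hδ : deltaA k univ = 0 := by simp [deltaA]
  have hE : numEdgesIn k univ = numEdges k := rfl
  rw [wA_eq_numEdgesIn_add_deltaA hsym, hδ, hE, genus, card_univ]
  ring

section Saturated

variable {A : Finset V}

lemma IsSaturated.mem_compl_iff (hA : IsSaturated k A) (v : V) :
    v ∈ Aᶜ ↔ contractMap k v ∈ (A.image (contractMap k))ᶜ := by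
  rw [mem_compl, mem_compl, hA.mem_iff]

lemma IsSaturated.mem_of_mem_fiber (hA : IsSaturated k A) {c : V2 k} {v : V}
    (hc : c ∈ A.image (contractMap k)) (hv : v ∈ fiber k c) : v ∈ A :=
  (hA.mem_iff v).2 (mem_fiber.1 hv ▸ hc)

lemma isSaturated_fiber (c : V2 k) : IsSaturated k (fiber k c) :=
  fun _ hu _ h => mem_fiber.2 (h.trans (mem_fiber.1 hu))

lemma image_fiber (c : V2 k) : (fiber k c).image (contractMap k) = {c} := by
  ext d
  rw [mem_image, mem_singleton]
  constructor
  · rintro ⟨v, hv, rfl⟩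
    exact mem_fiber.1 hv
  · rintro rfl
    obtain ⟨v, hv⟩ := fiber_nonempty d
    exact ⟨v, hv, mem_fiber.1 hv⟩

lemma IsSaturated.deltaA_image (hA : IsSaturated k A) :
    deltaA (k2 k) (A.image (contractMap k)) = deltaA k A := by
  rw [deltaA, deltaA, ← sum_sum_fiber hA.mem_iff]
  refine sum_congr rfl fun c hc => ?_
  calc ∑ c' ∈ (A.image (contractMap k))ᶜ, (k2 k c c' : ℤ)
      = ∑ c' ∈ (A.image (contractMap k))ᶜ,
          ∑ u ∈ fiber k c, ∑ v ∈ fiber k c', (k u v : ℤ) := by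
        refine sum_congr rfl fun c' hc' => ?_
        rw [k2_of_ne (ne_of_mem_of_not_mem hc (mem_compl.1 hc'))]
        push_cast
        rfl
    _ = ∑ u ∈ fiber k c,
          ∑ c' ∈ (A.image (contractMap k))ᶜ, ∑ v ∈ fiber k c', (k u v : ℤ) :=
        sum_comm
    _ = ∑ u ∈ fiber k c, ∑ v ∈ Aᶜ, (k u v : ℤ) :=
        sum_congr rfl fun u _ => sum_sum_fiber hA.mem_compl_iff _

lemma wA_fiber (hsym : ∀ u v, k u v = k v u) (hconn : (graphOf k).Connected) (w : V → ℕ)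
    (c : V2 k) : wA k w (fiber k c) = wA (k2 k) (w2 k w) {c} := by
  have hδ : deltaA (k2 k) {c} = deltaA k (fiber k c) := by
    rw [← image_fiber c]
    exact (isSaturated_fiber c).deltaA_image
  rw [wA_eq_numEdgesIn_add_deltaA hsym, wA_eq_numEdgesIn_add_deltaA (k2_comm hsym),
    numEdgesIn_fiber hsym hconn, hδ]
  simp only [w2, numEdgesIn, Nat.cast_sum, sum_singleton, card_singleton, erase_singleton,
    sum_empty, Nat.zero_div, add_zero]
  ring

lemma IsSaturated.wA_image (hA : IsSaturated k A) (hsym : ∀ u v, k u v = k v u)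
    (hconn : (graphOf k).Connected) (w : V → ℕ) :
    wA (k2 k) (w2 k w) (A.image (contractMap k)) = wA k w A :=
  calc wA (k2 k) (w2 k w) (A.image (contractMap k))
      = ∑ c ∈ A.image (contractMap k), wA (k2 k) (w2 k w) {c} := by
        simp only [wA, sum_singleton]
    _ = ∑ c ∈ A.image (contractMap k), wA k w (fiber k c) :=
        sum_congr rfl fun c _ => (wA_fiber hsym hconn w c).symm
    _ = wA k w A := sum_sum_fiber hA.mem_iff _

lemma isSaturated_univ : IsSaturated k univ := fun _ _ v _ => mem_univ v

lemma genus_k2 (hsym : ∀ u v, k u v = k v u) (hconn : (graphOf k).Connected) (w : V → ℕ) :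
    genus (k2 k) (w2 k w) = genus k w := by
  have h := isSaturated_univ.wA_image hsym hconn w
  rw [image_univ_of_surjective contractMap_surjective, wA_univ (k2_comm hsym),
    wA_univ hsym] at h
  linarith

lemma IsSaturated.mA_image (hA : IsSaturated k A) (hsym : ∀ u v, k u v = k v u)
    (hconn : (graphOf k).Connected) (w : V → ℕ) (D : ℤ) :
    mA (k2 k) (w2 k w) D (A.image (contractMap k)) = mA k w D A := by
  rw [mA, mA, hA.wA_image hsym hconn, hA.deltaA_image, genus_k2 hsym hconn]

lemma IsSaturated.isConnectedSubset_image_iff (hA : IsSaturated k A) :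
    IsConnectedSubset (k2 k) (A.image (contractMap k)) ↔ IsConnectedSubset k A := by
  let f : ↥(A : Set V) → ↥(A.image (contractMap k) : Set (V2 k)) := fun a =>
    ⟨contractMap k a, mem_image_of_mem _ a.2⟩
  refine (SimpleGraph.connected_iff_of_surjective (f := f) ?_ ?_ ?_ ?_).symm
  · rintro ⟨c, hc⟩
    obtain ⟨u, hu, rfl⟩ := mem_image.1 hc
    exact ⟨⟨u, hu⟩, rfl⟩
  · intro a b hadj hab
    exact graphOf_k2_adj hadj fun h => hab (Subtype.ext h)
  · rintro ⟨c, hc⟩ ⟨d, hd⟩ hadj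
    obtain ⟨u, hu, v, hv, huv⟩ := exists_adj_of_graphOf_k2_adj hadj
    exact ⟨⟨u, hA.mem_of_mem_fiber hc hu⟩, ⟨v, hA.mem_of_mem_fiber hd hv⟩,
      Subtype.ext (mem_fiber.1 hu), Subtype.ext (mem_fiber.1 hv), huv⟩
  · rintro ⟨a, ha⟩ ⟨b, hb⟩ hab
    have hsub : Set.MapsTo id (fiber k (contractMap k a) : Set V) A := fun _ hx =>
      hA.mem_of_mem_fiber (mem_image_of_mem _ ha) hx
    exact ((connected_induce_fiber (k := k) _).preconnected ⟨a, mem_fiber.2 rfl⟩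
      ⟨b, mem_fiber.2 (congrArg Subtype.val hab).symm⟩).map
      (SimpleGraph.induceHom (SimpleGraph.Hom.ofLE bridgeGraph_le_graphOf) hsub)

end Saturated

theorem stmt7_general (V : Type) [Fintype V] [DecidableEq V] (k : V → V → ℕ) (w : V → ℕ)
    (hsym : ∀ u v, k u v = k v u) (hconn : (graphOf k).Connected)
    (A : Finset V)
    (hsat : ∀ u ∈ A, ∀ v : V,
      Quotient.mk (contractSetoid k) v = Quotient.mk (contractSetoid k) u → v ∈ A) :
    deltaA k A = deltaA (k2 k) (A.image (fun v => Quotient.mk (contractSetoid k) v)) ∧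
    wA k w A = wA (k2 k) (w2 k w) (A.image (fun v => Quotient.mk (contractSetoid k) v)) ∧
    (∀ D : ℤ, mA k w D A =
      mA (k2 k) (w2 k w) D (A.image (fun v => Quotient.mk (contractSetoid k) v))) ∧
    (IsConnectedSubset k A ↔
      IsConnectedSubset (k2 k) (A.image (fun v => Quotient.mk (contractSetoid k) v))) := by
  have hA : IsSaturated k A := hsat
  exact ⟨hA.deltaA_image.symm, (hA.wA_image hsym hconn w).symm,
    fun D => (hA.mA_image hsym hconn w D).symm, hA.isConnectedSubset_image_iff.symm⟩

/-- If `A ⊆ V` is a union of `≈`-classes with image `A² = φ(A)`,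
then `δ_A = δ_{A²}`, `w_A = w_{A²}`, `m_A(d) = m_{A²}(d)` for every `d`, and
`A` is connected in `Γ` iff `A²` is connected in `Γ²`. -/
theorem stmt7 (V : Type) [Fintype V] [DecidableEq V] (k : V → V → ℕ) (w : V → ℕ)
    (hsym : ∀ u v, k u v = k v u) (hconn : (graphOf k).Connected)
    (hg : 2 ≤ genus k w) (A : Finset V)
    (hsat : ∀ u ∈ A, ∀ v : V,
      Quotient.mk (contractSetoid k) v = Quotient.mk (contractSetoid k) u → v ∈ A) :
    deltaA k A = deltaA (k2 k) (A.image (fun v => Quotient.mk (contractSetoid k) v)) ∧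
    wA k w A = wA (k2 k) (w2 k w) (A.image (fun v => Quotient.mk (contractSetoid k) v)) ∧
    (∀ D : ℤ, mA k w D A =
      mA (k2 k) (w2 k w) D (A.image (fun v => Quotient.mk (contractSetoid k) v))) ∧
    (IsConnectedSubset k A ↔
      IsConnectedSubset (k2 k) (A.image (fun v => Quotient.mk (contractSetoid k) v))) :=
  stmt7_general V k w hsym hconn A hsat
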